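/- arXiv:2403.14604 — 5 statements merged into one kernel-verified Lean document; each statement's English description precedes it below -/
import Mathlib

section
/- ζ(1,2) = ζ(3), i.e., ∑_{0<m<n} 1/(m·n²) = ∑_{n≥1} 1/n³. -/
open scoped BigOperators
open Real

/-- The multiple zeta value `ζ(k₁,…,k_d) = ∑_{0<m₁<⋯<m_d} ∏ 1/m_i^{k_i}`
(as a `tsum` over strictly increasing tuples of positive integers). -/
noncomputable def MZV (k : List ℕ) : ℝ :=
  ∑' m : {f : Fin k.length → ℕ+ // StrictMono f}, ∏ i, 1 / ((m.1 i : ℕ) : ℝ) ^ k.get i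

/-!
Euler's argument: evaluate Tornheim's double series `T = ∑_{m,k ≥ 1} 1 / (m k (m + k))` in two ways.
The partial fractions `1 / (m k (m + k)) = 1 / (m (m + k)²) + 1 / (k (m + k)²)` and the symmetry
`m ↔ k` give `T = 2 ζ(1,2)`. Summing over `k` first, `1 / (k (m + k)) = (1/k - 1/(m + k)) / m`
telescopes to `H_m / m`, so `T = ∑_m H_m / m² = ζ(1,2) + ζ(3)`. All rearrangements take place in
`ℝ≥0∞`, where they need no summability; cancelling `ζ(1,2)` needs only `ζ(1,2) < ∞`.
-/

open Finset Filter Topology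
open scoped ENNReal

section Telescoping
variable {f : ℕ → ℝ}

theorem hasSum_sub_succ_of_antitone (hf : Antitone f) (h0 : Tendsto f atTop (𝓝 0)) :
    HasSum (fun n ↦ f n - f (n + 1)) (f 0) := by
  refine (hasSum_iff_tendsto_nat_of_nonneg (fun n ↦ sub_nonneg.2 (hf n.le_succ)) _).2 ?_
  simp_rw [sum_range_sub']
  simpa using h0.const_sub (f 0)

theorem hasSum_sub_add_of_antitone (hf : Antitone f) (h0 : Tendsto f atTop (𝓝 0)) (m : ℕ) :
    HasSum (fun n ↦ f n - f (n + m)) (∑ j ∈ range m, f j) := by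
  induction m with
  | zero => simp [hasSum_zero]
  | succ m ih =>
    have hshift : HasSum (fun n ↦ f (n + m) - f (n + 1 + m)) (f m) := by
      simpa using hasSum_sub_succ_of_antitone (f := fun n ↦ f (n + m))
        (hf.comp_monotone fun _ _ h ↦ by omega) (h0.comp (tendsto_add_atTop_nat m))
    rw [sum_range_succ]
    convert ih.add hshift using 2 with n
    ring_nf

end Telescoping

theorem hasSum_one_div_mul_mul_add (m : ℕ) (hm : 0 < m) :
    HasSum (fun k : ℕ+ ↦ 1 / ((m : ℝ) * k * (m + k)))
      (∑ j ∈ range m, 1 / (((j + 1 : ℕ) : ℝ) * m ^ 2)) := by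
  have hm' : (0 : ℝ) < m := by exact_mod_cast hm
  have hf : Antitone fun n : ℕ ↦ 1 / ((n : ℝ) + 1) := fun a b hab ↦ by dsimp only; gcongr
  have h := (hasSum_sub_add_of_antitone hf tendsto_one_div_add_atTop_nhds_zero_nat m).mul_left
    (1 / (m : ℝ) ^ 2)
  refine hasSum_pnat_iff_hasSum_succ (f := fun k : ℕ ↦ 1 / ((m : ℝ) * k * (m + k))) |>.2 ?_
  have hterm : ∀ n : ℕ, 1 / ((m : ℝ) * ((n + 1 : ℕ) : ℝ) * (m + ((n + 1 : ℕ) : ℝ)))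
      = 1 / (m : ℝ) ^ 2 * (1 / ((n : ℝ) + 1) - 1 / (((n + m : ℕ) : ℝ) + 1)) := fun n ↦ by
    push_cast
    field_simp
    ring
  have hsum : ∑ j ∈ range m, 1 / (((j + 1 : ℕ) : ℝ) * m ^ 2)
      = 1 / (m : ℝ) ^ 2 * ∑ j ∈ range m, 1 / ((j : ℝ) + 1) := by
    rw [mul_sum]
    refine sum_congr rfl fun j _ ↦ ?_
    push_cast
    field_simp
  rw [hsum]
  simpa only [hterm] using h

theorem hasSum_one_div_add_mul_add_add_one {x : ℝ} (hx : 0 < x) :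
    HasSum (fun n : ℕ ↦ 1 / ((x + n) * (x + n + 1))) (1 / x) := by
  have hf : Antitone fun n : ℕ ↦ (x + n)⁻¹ := fun a b hab ↦ by dsimp only; gcongr
  have h0 : Tendsto (fun n : ℕ ↦ (x + n)⁻¹) atTop (𝓝 0) :=
    (tendsto_atTop_add_const_left _ x tendsto_natCast_atTop_atTop).inv_tendsto_atTop
  convert hasSum_sub_succ_of_antitone hf h0 using 1
  · ext n
    have : 0 < x + n := by positivity
    push_cast
    field_simp
    ring
  · simp

theorem tsum_eq_toReal_tsum_ofReal {ι : Type*} {f : ι → ℝ} (hf : ∀ i, 0 ≤ f i) :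
    ∑' i, f i = (∑' i, ENNReal.ofReal (f i)).toReal := by
  rw [ENNReal.tsum_toReal_eq fun _ ↦ ENNReal.ofReal_ne_top]
  exact tsum_congr fun i ↦ (ENNReal.toReal_ofReal (hf i)).symm

theorem tsum_add_eq_tsum_ite_lt {α : Type*} [AddCommMonoid α] [TopologicalSpace α]
    (F : ℕ+ → ℕ+ → α) :
    ∑' p : ℕ+ × ℕ+, F p.1 (p.1 + p.2) = ∑' p : ℕ+ × ℕ+, if p.1 < p.2 then F p.1 p.2 else 0 := by
  have hinj : Function.Injective fun p : ℕ+ × ℕ+ ↦ (p.1, p.1 + p.2) := by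
    rintro ⟨a, b⟩ ⟨c, d⟩ h
    simp only [Prod.mk.injEq] at h
    obtain ⟨rfl, h⟩ := h
    simpa using h
  refine Eq.trans ?_ (hinj.tsum_eq (f := fun p ↦ if p.1 < p.2 then F p.1 p.2 else 0) ?_)
  · exact tsum_congr fun p ↦ (if_pos (PNat.lt_add_right _ _)).symm
  · rintro ⟨a, n⟩ h
    have hlt : a < n := of_not_not fun hlt ↦ h (if_neg hlt)
    exact ⟨(a, n - a), by simp [PNat.add_sub_of_lt hlt]⟩

theorem tsum_pnat_ite_le {α : Type*} [AddCommMonoid α] [TopologicalSpace α] (F : ℕ → α)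
    (m : ℕ+) : ∑' a : ℕ+, (if a ≤ m then F a else 0) = ∑ j ∈ range m, F (j + 1) := by
  simp_rw [← PNat.coe_le_coe]
  rw [tsum_pnat_eq_tsum_succ (f := fun a ↦ if a ≤ m then F a else 0),
    tsum_eq_sum (s := range m) fun j hj ↦ if_neg (by simpa using hj)]
  exact sum_congr rfl fun j hj ↦ if_pos (by simpa using hj)

theorem MZV_one_two_eq :
    MZV [1, 2] = ∑' p : ℕ+ × ℕ+, if p.1 < p.2 then 1 / ((p.1 : ℝ) * (p.2 : ℝ) ^ 2) else 0 := by
  let g : {f : Fin 2 → ℕ+ // StrictMono f} → ℕ+ × ℕ+ := fun f ↦ (f.1 0, f.1 1)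
  have hinj : Function.Injective g := by
    rintro ⟨f, hf⟩ ⟨f', hf'⟩ h
    simp only [g, Prod.mk.injEq] at h
    ext i
    fin_cases i
    exacts [h.1, h.2]
  refine Eq.trans ?_
    (hinj.tsum_eq (f := fun p ↦ if p.1 < p.2 then 1 / ((p.1 : ℝ) * (p.2 : ℝ) ^ 2) else 0) ?_)
  · refine tsum_congr fun f ↦ ?_
    rw [if_pos (f.2 (show (0 : Fin 2) < 1 by decide))]
    simp [g, Fin.prod_univ_succ]
  · rintro ⟨a, n⟩ h
    have hlt : a < n := of_not_not fun hlt ↦ h (if_neg hlt)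
    refine ⟨⟨![a, n], ?_⟩, rfl⟩
    exact Fin.strictMono_iff_lt_succ.2 fun i ↦ by fin_cases i; exact hlt

noncomputable def mzvTerm (a n : ℕ) : ℝ≥0∞ := ENNReal.ofReal (1 / ((a : ℝ) * n ^ 2))

noncomputable def tornheimTerm (m k : ℕ) : ℝ≥0∞ := ENNReal.ofReal (1 / ((m : ℝ) * k * (m + k)))

theorem tornheimTerm_eq_add {m k : ℕ} (hm : 0 < m) (hk : 0 < k) :
    tornheimTerm m k = mzvTerm m (m + k) + mzvTerm k (m + k) := by
  have hm' : (0 : ℝ) < m := by exact_mod_cast hm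
  have hk' : (0 : ℝ) < k := by exact_mod_cast hk
  rw [tornheimTerm, mzvTerm, mzvTerm, ← ENNReal.ofReal_add (by positivity) (by positivity)]
  push_cast
  congr 1
  field_simp
  ring

theorem tsum_tornheimTerm_eq_add_self :
    ∑' p : ℕ+ × ℕ+, tornheimTerm p.1 p.2 =
      (∑' p : ℕ+ × ℕ+, mzvTerm p.1 (p.1 + p.2)) + ∑' p : ℕ+ × ℕ+, mzvTerm p.1 (p.1 + p.2) := by
  have hswap : ∑' p : ℕ+ × ℕ+, mzvTerm p.2 (p.1 + p.2) =
      ∑' p : ℕ+ × ℕ+, mzvTerm p.1 (p.1 + p.2) := by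
    rw [← (Equiv.prodComm ℕ+ ℕ+).tsum_eq]
    simp [add_comm]
  calc ∑' p : ℕ+ × ℕ+, tornheimTerm p.1 p.2
      = ∑' p : ℕ+ × ℕ+, (mzvTerm p.1 (p.1 + p.2) + mzvTerm p.2 (p.1 + p.2)) :=
        tsum_congr fun p ↦ tornheimTerm_eq_add p.1.pos p.2.pos
    _ = _ := by rw [ENNReal.tsum_add, hswap]

theorem tsum_tornheimTerm_eq_tsum_ite_le (m : ℕ+) :
    ∑' k : ℕ+, tornheimTerm m k = ∑' a : ℕ+, if a ≤ m then mzvTerm a m else 0 := by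
  have h := hasSum_one_div_mul_mul_add m m.pos
  rw [tsum_pnat_ite_le (fun a ↦ mzvTerm a m)]
  unfold mzvTerm tornheimTerm
  rw [← ENNReal.ofReal_sum_of_nonneg fun j _ ↦ by positivity,
    ← h.tsum_eq, ENNReal.ofReal_tsum_of_nonneg (fun k ↦ by positivity) h.summable]

theorem tsum_tornheimTerm_eq_add_diag :
    ∑' p : ℕ+ × ℕ+, tornheimTerm p.1 p.2 =
      (∑' p : ℕ+ × ℕ+, if p.1 < p.2 then mzvTerm p.1 p.2 else 0) + ∑' n : ℕ+, mzvTerm n n := by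
  have hsplit (m : ℕ+) : (∑' a : ℕ+, if a ≤ m then mzvTerm a m else 0) =
      (∑' a : ℕ+, if a < m then mzvTerm a m else 0) + mzvTerm m m := by
    rw [← tsum_ite_eq m (fun a ↦ mzvTerm a m), ← ENNReal.tsum_add]
    refine tsum_congr fun a ↦ ?_
    rcases lt_trichotomy a m with h | rfl | h
    · simp [h, h.le, h.ne]
    · simp
    · simp [h.ne', not_le.2 h, not_lt.2 h.le]
  rw [ENNReal.tsum_prod', ENNReal.tsum_prod',
    ENNReal.tsum_comm (f := fun a n : ℕ+ ↦ if a < n then mzvTerm a n else 0), ← ENNReal.tsum_add]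
  exact tsum_congr fun m ↦ (tsum_tornheimTerm_eq_tsum_ite_le m).trans (hsplit m)

-- `1 / (m + k)² ≤ 1 / ((m + k - 1) (m + k))`, and the latter telescopes to `1 / m`.
theorem tsum_mzvTerm_add_le (m : ℕ+) :
    ∑' k : ℕ+, mzvTerm m (m + k) ≤ ENNReal.ofReal (1 / (m : ℝ) ^ 2) := by
  have hm : (0 : ℝ) < m := by exact_mod_cast m.pos
  have h := (hasSum_one_div_add_mul_add_add_one hm).mul_left (1 / (m : ℝ))
  rw [tsum_pnat_eq_tsum_succ (f := fun k ↦ mzvTerm m (m + k)), sq, ← one_div_mul_one_div,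
    ← h.tsum_eq, ENNReal.ofReal_tsum_of_nonneg (fun n ↦ by positivity) h.summable]
  refine ENNReal.tsum_le_tsum fun n ↦ ENNReal.ofReal_le_ofReal ?_
  rw [div_mul_div_comm, one_mul]
  push_cast
  gcongr
  nlinarith

theorem tsum_mzvTerm_add_ne_top : ∑' p : ℕ+ × ℕ+, mzvTerm p.1 (p.1 + p.2) ≠ ∞ := by
  have hsum : Summable fun m : ℕ+ ↦ 1 / (m : ℝ) ^ 2 :=
    (Real.summable_one_div_nat_pow.2 one_lt_two).comp_injective PNat.coe_injective
  rw [ENNReal.tsum_prod']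
  exact ne_top_of_le_ne_top hsum.tsum_ofReal_ne_top (ENNReal.tsum_le_tsum tsum_mzvTerm_add_le)

theorem tsum_ite_lt_mzvTerm_eq_tsum_mzvTerm_diag :
    (∑' p : ℕ+ × ℕ+, if p.1 < p.2 then mzvTerm p.1 p.2 else 0) = ∑' n : ℕ+, mzvTerm n n := by
  have hS : ∑' p : ℕ+ × ℕ+, mzvTerm p.1 (p.1 + p.2) =
      ∑' p : ℕ+ × ℕ+, if p.1 < p.2 then mzvTerm p.1 p.2 else 0 := by
    simpa using tsum_add_eq_tsum_ite_lt fun a n : ℕ+ ↦ mzvTerm a n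
  have h := tsum_tornheimTerm_eq_add_self.symm.trans tsum_tornheimTerm_eq_add_diag
  have hfin := tsum_mzvTerm_add_ne_top
  rw [hS] at h hfin
  exact (ENNReal.add_right_inj hfin).1 h

/-- `ζ(1,2) = ζ(3)`. -/
theorem zeta_one_two : MZV [1, 2] = ∑' n : ℕ+, 1 / ((n : ℕ) : ℝ) ^ 3 := by
  rw [MZV_one_two_eq, tsum_eq_toReal_tsum_ofReal (fun p ↦ by split_ifs <;> positivity),
    tsum_eq_toReal_tsum_ofReal (fun n ↦ by positivity)]
  simp_rw [apply_ite ENNReal.ofReal, ENNReal.ofReal_zero, pow_succ' _ 2]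
  exact congrArg ENNReal.toReal tsum_ite_lt_mzvTerm_eq_tsum_mzvTerm_diag
end

section
/- For any positive integers k₁,…,k_d and any j with 1 ≤ j ≤ d, the antipode identity ∑_{i=0}^{j} (-1)^i · ζ^{⋆,*}(k₁,…,k_i) · ζ^*(k_j,…,k_{i+1}) = 0 holds (for j > 0), where the empty-argument values are 1. -/
open scoped BigOperators
open Real

/-- The stuffle (quasi-shuffle) product of two words, as a multiset of words. -/
def stuffle : List ℕ → List ℕ → Multiset (List ℕ)
  | [], v => {v}
  | u, [] => {u}
  | a :: u, b :: v =>
      (stuffle u (b :: v)).map (a :: ·) + (stuffle (a :: u) v).map (b :: ·) +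
        (stuffle u v).map ((a + b) :: ·)
  termination_by u v => u.length + v.length

/-- All contractions of a word: the results of replacing each comma by `,` or `+`. -/
def contractions : List ℕ → Multiset (List ℕ)
  | [] => {[]}
  | [a] => {[a]}
  | a :: b :: t => (contractions (b :: t)).map (a :: ·) + contractions ((a + b) :: t)
  termination_by l => l.length

/-- `Z` is a stuffle (harmonic) regularization of multiple zeta values:
it takes the value `1` on the empty word, agrees with the convergent multiple zeta
values on admissible words, and is a homomorphism for the stuffle product. -/
structure IsStuffleReg (Z : List ℕ → ℝ) : Prop where
  empty : Z [] = 1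
  conv : ∀ l : List ℕ, (∀ i ∈ l, 0 < i) → 2 ≤ l.getLastD 2 → Z l = MZV l
  mul : ∀ u v : List ℕ, (∀ i ∈ u, 0 < i) → (∀ i ∈ v, 0 < i) →
    Z u * Z v = ((stuffle u v).map Z).sum

/-- The star version `ζ^{⋆,*}(k₁,…,k_d)`: the sum of `Z` over all contractions. -/
noncomputable def zetaStarOf (Z : List ℕ → ℝ) (l : List ℕ) : ℝ :=
  ((contractions l).map Z).sum

/-- `ζ_a^*(l₁,…,l_r) = (-1)^a ∑_{a₁+⋯+a_r=a} ζ^*(l₁+a₁,…,l_r+a_r) ∏ C(l_i-1+a_i,a_i)`. -/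
noncomputable def zetaA (Z : List ℕ → ℝ) (a : ℕ) (l : List ℕ) : ℝ :=
  (-1 : ℝ) ^ a *
    ∑ f ∈ (Fintype.piFinset fun _ : Fin l.length => Finset.range (a + 1)).filter
        (fun f => ∑ i, f i = a),
      Z (List.ofFn fun i => l.get i + f i) *
        ∏ i, (Nat.choose (l.get i - 1 + f i) (f i) : ℝ)

/-- `δ^{k₁,…,k_d}`: equal to `(-1)^n π^{2n}/(2n)!` if `(k₁,…,k_d) = (1,…,1)` has even
length `2n`, and `0` otherwise. -/
noncomputable def deltaVal (l : List ℕ) : ℝ :=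
  if l.all (· = 1) ∧ l.length % 2 = 0 then
    (-1 : ℝ) ^ (l.length / 2) * π ^ l.length / (Nat.factorial l.length) else 0

/-! ### Auxiliary lemmas -/

lemma stuffle_nil_right (u : List ℕ) : stuffle u [] = {u} := by
  cases u <;> simp [stuffle]

/-- The stuffle recursion at the right end of both words. -/
lemma stuffle_append (a b : ℕ) : ∀ (n : ℕ) (u v : List ℕ), u.length + v.length ≤ n →
    stuffle (u ++ [a]) (v ++ [b]) =
      (stuffle u (v ++ [b])).map (· ++ [a]) + (stuffle (u ++ [a]) v).map (· ++ [b]) +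
        (stuffle u v).map (· ++ [a + b]) := by
  intro n
  induction n with
  | zero =>
    intro u v h
    obtain ⟨rfl, rfl⟩ : u = [] ∧ v = [] := by
      constructor <;> (apply List.eq_nil_of_length_eq_zero; omega)
    simp [stuffle, stuffle_nil_right, -Multiset.singleton_add]
    abel
  | succ n ih =>
    intro u v h
    match u, v with
    | [], [] =>
      simp [stuffle, stuffle_nil_right, -Multiset.singleton_add]
      abel
    | [], d :: v' =>
      have IH := ih [] v' (by simp at h ⊢; omega)
      simp only [List.nil_append, List.cons_append] at IH ⊢
      simp [stuffle, IH, Multiset.map_map, Function.comp, -Multiset.singleton_add,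
        stuffle_nil_right]
      abel
    | c :: u', [] =>
      have IH := ih u' [] (by simp at h ⊢; omega)
      simp only [List.nil_append, List.cons_append] at IH ⊢
      simp [stuffle, IH, Multiset.map_map, Function.comp, -Multiset.singleton_add,
        stuffle_nil_right]
      abel
    | c :: u', d :: v' =>
      have IH1 := ih u' (d :: v') (by simp at h ⊢; omega)
      have IH2 := ih (c :: u') v' (by simp at h ⊢; omega)
      have IH3 := ih u' v' (by simp at h ⊢; omega)
      simp only [List.nil_append, List.cons_append] at IH1 IH2 IH3 ⊢
      simp [stuffle, IH1, IH2, IH3, Multiset.map_map, Function.comp, -Multiset.singleton_add,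
        stuffle_nil_right, Multiset.map_add]
      abel

lemma stuffle_append' (u v : List ℕ) (a b : ℕ) :
    stuffle (u ++ [a]) (v ++ [b]) =
      (stuffle u (v ++ [b])).map (· ++ [a]) + (stuffle (u ++ [a]) v).map (· ++ [b]) +
        (stuffle u v).map (· ++ [a + b]) :=
  stuffle_append a b (u.length + v.length) u v le_rfl

/-- contractions, split as (initial blocks, last block). -/
def cs : List ℕ → Multiset (List ℕ × ℕ)
  | [] => 0
  | [a] => {([], a)}
  | a :: b :: t => (cs (b :: t)).map (fun p => (a :: p.1, p.2)) + cs ((a + b) :: t)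
  termination_by l => l.length

lemma contractions_eq_cs : ∀ l : List ℕ, l ≠ [] →
    contractions l = (cs l).map (fun p => p.1 ++ [p.2])
  | [], h => absurd rfl h
  | [a], _ => by simp [contractions, cs]
  | a :: b :: t, _ => by
    rw [contractions, cs]
    rw [contractions_eq_cs (b :: t) (by simp), contractions_eq_cs ((a + b) :: t) (by simp)]
    simp [Multiset.map_map, Function.comp]
  termination_by l => l.length

/-- The contraction recursion at the right end of the word. -/
lemma cs_append (b : ℕ) : ∀ (u : List ℕ), u ≠ [] →
    cs (u ++ [b]) = (cs u).map (fun p => (p.1 ++ [p.2], b)) + (cs u).map (fun p => (p.1, p.2 + b))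
  | [], h => absurd rfl h
  | [a], _ => by
    simp [cs, -Multiset.singleton_add]
  | a :: c :: t, _ => by
    have h1 := cs_append b (c :: t) (by simp)
    have h2 := cs_append b ((a + c) :: t) (by simp)
    simp only [List.cons_append] at h1 h2 ⊢
    rw [cs, h1, h2, cs]
    simp [Multiset.map_map, Function.comp, Multiset.map_add]
    abel
  termination_by u => u.length

lemma contractions_pos : ∀ (l : List ℕ), (∀ i ∈ l, 0 < i) →
    ∀ c ∈ contractions l, ∀ x ∈ c, 0 < x
  | [], _ => by simp [contractions]
  | [a], h => by
    simp [contractions]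
    exact h a (by simp)
  | a :: b :: t, h => by
    have h1 := contractions_pos (b :: t) (fun i hi => h i (by simp at hi ⊢; tauto))
    have h2 := contractions_pos ((a + b) :: t) (fun i hi => by
      rcases List.mem_cons.1 hi with rfl | hi
      · have := h a (by simp); omega
      · exact h i (by simp [hi]))
    rw [contractions]
    intro c hc x hx
    rcases Multiset.mem_add.1 hc with hc | hc
    · obtain ⟨c', hc', rfl⟩ := Multiset.mem_map.1 hc
      rcases List.mem_cons.1 hx with rfl | hx
      · exact h x (by simp)
      · exact h1 c' hc' x hx
    · exact h2 c hc x hx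
  termination_by l => l.length

section Main

variable (Z : List ℕ → ℝ) (k : List ℕ) (j : ℕ)

/-- The `M` sums: `ζ^{⋆,*}(k₁,…,k_i) ζ^*(k_j,…,k_{i+1})` expanded by stuffles. -/
noncomputable def Mv (i : ℕ) : ℝ :=
  ((contractions (k.take i)).map
    (fun c => ((stuffle c (((k.take j).drop i).reverse)).map Z).sum)).sum

/-- The `Y` sums (the telescoping terms). -/
noncomputable def Yv (i : ℕ) : ℝ :=
  ((cs (k.take i)).map
    (fun p => ((stuffle p.1 (((k.take j).drop i).reverse)).map
      (fun w => Z (w ++ [p.2]))).sum)).sum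

lemma term_eq_M (hZ : IsStuffleReg Z) (hk : ∀ i ∈ k, 0 < i) (i : ℕ) :
    zetaStarOf Z (k.take i) * Z (((k.take j).drop i).reverse) = Mv Z k j i := by
  rw [zetaStarOf, Mv, ← Multiset.sum_map_mul_right]
  refine congrArg _ (Multiset.map_congr rfl fun c hc => ?_)
  refine hZ.mul c _ (contractions_pos _ (fun x hx => hk x (List.mem_of_mem_take hx)) c hc)
    (fun x hx => hk x ?_)
  rw [List.mem_reverse] at hx
  exact List.mem_of_mem_take (List.mem_of_mem_drop hx)

lemma take_nonempty (i : ℕ) (h1 : 1 ≤ i) (h2 : i ≤ k.length) : k.take i ≠ [] := by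
  apply List.ne_nil_of_length_pos
  rw [List.length_take]
  omega

lemma v_succ (i : ℕ) (hij : i < j) (hjk : j ≤ k.length) :
    ((k.take j).drop i).reverse = ((k.take j).drop (i + 1)).reverse ++ [k.get ⟨i, by omega⟩] := by
  have hi : i < (k.take j).length := by rw [List.length_take]; omega
  rw [List.drop_eq_getElem_cons hi, List.reverse_cons]
  simp [List.getElem_take, List.get_eq_getElem]

lemma M_zero (hj0 : 0 < j) (hjk : j ≤ k.length) : Mv Z k j 0 = Yv Z k j 1 := by
  have hk0 : 0 < k.length := lt_of_lt_of_le hj0 hjk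
  have ht1 : k.take 1 = [k.get ⟨0, hk0⟩] := by
    rw [← List.take_concat_get' k 0 hk0]
    simp
  rw [Mv, Yv, ht1]
  rw [show contractions (k.take 0) = {[]} by simp [contractions]]
  rw [show cs [k.get ⟨0, hk0⟩] = {([], k.get ⟨0, hk0⟩)} from by simp [cs]]
  simp only [Multiset.map_singleton, Multiset.sum_singleton]
  rw [show stuffle [] (((k.take j).drop 0).reverse) = {((k.take j).drop 0).reverse} from by
    simp [stuffle]]
  rw [show stuffle [] (((k.take j).drop 1).reverse) = {((k.take j).drop 1).reverse} from by
    simp [stuffle]]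
  simp only [Multiset.map_singleton, Multiset.sum_singleton]
  rw [v_succ k j 0 hj0 hjk]

lemma M_last (hj0 : 0 < j) (hjk : j ≤ k.length) : Mv Z k j j = Yv Z k j j := by
  have hdrop : (k.take j).drop j = [] := by
    apply List.drop_eq_nil_of_le
    rw [List.length_take]; omega
  rw [Mv, Yv, hdrop, contractions_eq_cs _ (take_nonempty k j hj0 hjk), Multiset.map_map]
  refine congrArg _ (Multiset.map_congr rfl fun p hp => ?_)
  simp [stuffle_nil_right]

lemma M_mid (i : ℕ) (hi1 : 1 ≤ i) (hij : i < j) (hjk : j ≤ k.length) :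
    Mv Z k j i = Yv Z k j i + Yv Z k j (i + 1) := by
  have hik : i < k.length := by omega
  set b := k.get ⟨i, hik⟩ with hb
  have ht : k.take (i + 1) = k.take i ++ [b] := by
    rw [← List.take_concat_get' k i hik]; simp [hb]
  have hY1 : Yv Z k j (i + 1) =
      ((cs (k.take i)).map (fun p =>
        ((stuffle (p.1 ++ [p.2]) (((k.take j).drop (i+1)).reverse)).map
          (fun w => Z (w ++ [b]))).sum +
        ((stuffle p.1 (((k.take j).drop (i+1)).reverse)).map
          (fun w => Z (w ++ [p.2 + b]))).sum)).sum := by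
    rw [Yv, ht, cs_append b _ (take_nonempty k i hi1 (by omega)), Multiset.map_add,
      Multiset.sum_add, Multiset.map_map, Multiset.map_map, ← Multiset.sum_map_add]
    rfl
  have hv' : ((k.take j).drop i).reverse = ((k.take j).drop (i+1)).reverse ++ [b] :=
    v_succ k j i hij hjk
  rw [Mv, contractions_eq_cs _ (take_nonempty k i hi1 (by omega)), Multiset.map_map, hY1, Yv,
    ← Multiset.sum_map_add, hv']
  refine congrArg _ (Multiset.map_congr rfl fun p hp => ?_)
  simp only [Function.comp_apply]
  rw [stuffle_append']
  simp only [Multiset.map_add, Multiset.sum_add, Multiset.map_map, Function.comp_apply]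
  ring

end Main

/-- The antipode identity: for any `j > 0`,
`∑_{i=0}^{j} (-1)^i ζ^{⋆,*}(k₁,…,k_i) ζ^*(k_j,…,k_{i+1}) = 0`. -/
theorem antipode_identity (Z : List ℕ → ℝ) (hZ : IsStuffleReg Z)
    (k : List ℕ) (hk : ∀ i ∈ k, 0 < i) (j : ℕ) (hj0 : 0 < j) (hj : j ≤ k.length) :
    ∑ i ∈ Finset.range (j + 1),
      (-1 : ℝ) ^ i * zetaStarOf Z (k.take i) * Z (((k.take j).drop i).reverse) = 0 := by
  have hterm : ∀ i ∈ Finset.range (j + 1),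
      (-1 : ℝ) ^ i * zetaStarOf Z (k.take i) * Z (((k.take j).drop i).reverse)
        = (-1 : ℝ) ^ i * Mv Z k j i := by
    intro i _
    rw [mul_assoc, term_eq_M Z k j hZ hk i]
  rw [Finset.sum_congr rfl hterm]
  obtain ⟨j', rfl⟩ : ∃ j', j = j' + 1 := ⟨j - 1, by omega⟩
  rw [Finset.sum_range_succ, Finset.sum_range_succ']
  set F : ℕ → ℝ := fun m => (-1 : ℝ) ^ m * Yv Z k (j' + 1) m with hF
  have hmid : ∀ i ∈ Finset.range j',
      (-1 : ℝ) ^ (i + 1) * Mv Z k (j' + 1) (i + 1)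
        = (fun m => F (m + 1)) i - (fun m => F (m + 1)) (i + 1) := by
    intro i hi
    rw [Finset.mem_range] at hi
    rw [M_mid Z k (j' + 1) (i + 1) (by omega) (by omega) hj]
    simp only [hF, pow_succ]
    ring
  rw [Finset.sum_congr rfl hmid, Finset.sum_range_sub' (fun m => F (m + 1)) j',
    M_zero Z k (j' + 1) (by omega) hj, M_last Z k (j' + 1) (by omega) hj]
  simp only [hF, pow_succ, pow_zero]
  ring
end

section
/- The antipode identity in the stuffle Hopf algebra: in the quasi-shuffle (stuffle) algebra on the alphabet {z_k : k ≥ 1} with deconcatenation coproduct, for any nonempty word w = z_{k₁}⋯z_{k_j}, one has ∑_{i=0}^{j} (-1)^i · ζ^⋆-word(z_{k₁}⋯z_{k_i}) * (reversal word z_{k_j}⋯z_{k_{i+1}}) = 0, where ζ^⋆-word denotes the image under the map sending a word to the sum over all ways of contracting adjacent letters z_a z_b ↦ z_{a+b}. -/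
open scoped BigOperators

/-- The bilinear extension of the stuffle product to the quasi-shuffle algebra,
realized as the ℚ-vector space `List ℕ →₀ ℚ` spanned by words. -/
noncomputable def qsMul (x y : List ℕ →₀ ℚ) : List ℕ →₀ ℚ :=
  x.sum fun u a => y.sum fun v b =>
    (a * b) • ((stuffle u v).map fun w => Finsupp.single w (1 : ℚ)).sum

/-- The element `ζ^⋆`-word of `u`: the sum of all contractions of `u`. -/
noncomputable def starWord (u : List ℕ) : List ℕ →₀ ℚ :=
  ((contractions u).map fun w => Finsupp.single w (1 : ℚ)).sum

/-! This is `m ∘ (S ⊗ id) ∘ Δ = η ∘ ε` for the quasi-shuffle Hopf algebra, given Hoffman's formula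
`S(z_{k₁}⋯z_{k_i}) = (-1)^i ζ^⋆(z_{k_i}⋯z_{k₁})`, but it is proved directly. Let `F(k)` be the sum
in question and `G_a(t)` the same sum with every ζ^⋆-factor prefixed by `z_a` (both are
`antipodeSum x` below, for `x = starWord` and `x = prepend a ∘ starWord`). Expanding the stuffle
product at the first letter `z_c` of the right factor gives
`G_a(s c) = z_a F(s c) + z_c G_a(s) + z_{a+c} F(s)`, and splitting off the first letter of `a b t`
gives `F(a b t) + G_a(b t) + F((a+b) t) = rev(a b t) + rev((a+b) t)`. A simultaneous induction on
the length then shows `F(k) = 0` for `k ≠ []` and `G_a(b t) = rev(a b t) + rev((a+b) t)`. -/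

open Finset

noncomputable section

def stuffleSum (u v : List ℕ) : List ℕ →₀ ℚ :=
  ((stuffle u v).map fun w => Finsupp.single w (1 : ℚ)).sum

def prepend (a : ℕ) : (List ℕ →₀ ℚ) →ₗ[ℚ] (List ℕ →₀ ℚ) :=
  Finsupp.lmapDomain ℚ ℚ (a :: ·)

def stuffleMul : (List ℕ →₀ ℚ) →ₗ[ℚ] (List ℕ →₀ ℚ) →ₗ[ℚ] (List ℕ →₀ ℚ) :=
  Finsupp.lift _ ℚ _ fun u => Finsupp.lift _ ℚ _ fun v => stuffleSum u v

lemma qsMul_eq_stuffleMul (x y : List ℕ →₀ ℚ) : qsMul x y = stuffleMul x y := by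
  simp [stuffleMul, qsMul, stuffleSum, Finsupp.lift_apply, mul_smul, Finsupp.smul_sum]

lemma prepend_single (a : ℕ) (w : List ℕ) :
    prepend a (Finsupp.single w 1) = Finsupp.single (a :: w) 1 := by
  simp [prepend, Finsupp.mapDomain_single]

lemma stuffleMul_single_single (u v : List ℕ) :
    stuffleMul (Finsupp.single u 1) (Finsupp.single v 1) = stuffleSum u v := by
  simp [stuffleMul, Finsupp.lift_apply, Finsupp.sum_single_index]

lemma sum_map_single_map_cons (a : ℕ) (M : Multiset (List ℕ)) :
    ((M.map (a :: ·)).map fun w => Finsupp.single w (1 : ℚ)).sum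
      = prepend a (M.map fun w => Finsupp.single w (1 : ℚ)).sum := by
  rw [map_multiset_sum, Multiset.map_map, Multiset.map_map]
  exact congrArg _ (Multiset.map_congr rfl fun w _ => (prepend_single a w).symm)

lemma stuffleSum_nil_left (v : List ℕ) : stuffleSum [] v = Finsupp.single v 1 := by
  simp [stuffleSum, stuffle]

lemma stuffleSum_nil_right (u : List ℕ) : stuffleSum u [] = Finsupp.single u 1 := by
  cases u <;> simp [stuffleSum, stuffle]

lemma stuffleSum_cons_cons (a b : ℕ) (u v : List ℕ) :
    stuffleSum (a :: u) (b :: v) = prepend a (stuffleSum u (b :: v))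
      + prepend b (stuffleSum (a :: u) v) + prepend (a + b) (stuffleSum u v) := by
  rw [stuffleSum, stuffle]
  simp only [Multiset.map_add, Multiset.sum_add, sum_map_single_map_cons]
  rfl

lemma stuffleMul_single_nil_left (y : List ℕ →₀ ℚ) :
    stuffleMul (Finsupp.single [] 1) y = y := by
  induction y using Finsupp.induction_linear with
  | zero => simp
  | add f g hf hg => rw [map_add, hf, hg]
  | single v r =>
    rw [← Finsupp.smul_single_one v r, map_smul, stuffleMul_single_single, stuffleSum_nil_left]

lemma stuffleMul_single_nil_right (x : List ℕ →₀ ℚ) :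
    stuffleMul x (Finsupp.single [] 1) = x := by
  induction x using Finsupp.induction_linear with
  | zero => simp
  | add f g hf hg => rw [map_add, LinearMap.add_apply, hf, hg]
  | single u r =>
    rw [← Finsupp.smul_single_one u r, map_smul, LinearMap.smul_apply, stuffleMul_single_single,
      stuffleSum_nil_right]

lemma stuffleMul_prepend_single_cons (a c : ℕ) (v : List ℕ) (x : List ℕ →₀ ℚ) :
    stuffleMul (prepend a x) (Finsupp.single (c :: v) 1)
      = prepend a (stuffleMul x (Finsupp.single (c :: v) 1))
        + prepend c (stuffleMul (prepend a x) (Finsupp.single v 1))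
        + prepend (a + c) (stuffleMul x (Finsupp.single v 1)) := by
  induction x using Finsupp.induction_linear with
  | zero => simp
  | add f g hf hg =>
    simp only [map_add, LinearMap.add_apply, hf, hg]
    abel
  | single u r =>
    rw [← Finsupp.smul_single_one u r]
    simp only [map_smul, LinearMap.smul_apply, ← smul_add, prepend_single,
      stuffleMul_single_single, stuffleSum_cons_cons]

lemma starWord_nil : starWord [] = Finsupp.single [] 1 := by
  simp [starWord, contractions]

lemma starWord_singleton (a : ℕ) : starWord [a] = prepend a (Finsupp.single [] 1) := by
  simp [starWord, contractions, prepend_single]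

lemma starWord_cons_cons (a b : ℕ) (t : List ℕ) :
    starWord (a :: b :: t) = prepend a (starWord (b :: t)) + starWord ((a + b) :: t) := by
  rw [starWord, contractions]
  simp only [Multiset.map_add, Multiset.sum_add, sum_map_single_map_cons]
  rfl

section Splittings

variable {α M : Type*} [AddCommMonoid M]

lemma sum_range_take_drop_cons (f : ℕ → List α → List α → M) (a : α) (t : List α) :
    ∑ i ∈ range ((a :: t).length + 1), f i ((a :: t).take i) ((a :: t).drop i)
      = f 0 [] (a :: t) + ∑ i ∈ range (t.length + 1), f (i + 1) (a :: t.take i) (t.drop i) := by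
  rw [List.length_cons, sum_range_succ', add_comm]
  simp

lemma sum_range_take_drop_append_singleton (f : ℕ → List α → List α → M) (s : List α) (c : α) :
    ∑ i ∈ range ((s ++ [c]).length + 1), f i ((s ++ [c]).take i) ((s ++ [c]).drop i)
      = ∑ i ∈ range (s.length + 1), f i (s.take i) (s.drop i ++ [c])
        + f (s.length + 1) (s ++ [c]) [] := by
  rw [List.length_append, List.length_singleton, sum_range_succ]
  congr 1
  · refine sum_congr rfl fun i hi => ?_
    have hi : i ≤ s.length := Nat.lt_succ_iff.mp (mem_range.mp hi)
    rw [List.take_append_of_le_length hi, List.drop_append_of_le_length hi]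
  · rw [List.take_of_length_le (by simp), List.drop_of_length_le (by simp)]

end Splittings

def antipodeSum (x : List ℕ → List ℕ →₀ ℚ) (k : List ℕ) : List ℕ →₀ ℚ :=
  ∑ i ∈ range (k.length + 1),
    (-1 : ℚ) ^ i • stuffleMul (x (k.take i)) (Finsupp.single ((k.drop i).reverse) 1)

lemma antipodeSum_add (x y : List ℕ → List ℕ →₀ ℚ) (k : List ℕ) :
    antipodeSum (x + y) k = antipodeSum x k + antipodeSum y k := by
  simp only [antipodeSum, Pi.add_apply, map_add, LinearMap.add_apply, smul_add, sum_add_distrib]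

lemma antipodeSum_cons (x : List ℕ → List ℕ →₀ ℚ) (a : ℕ) (t : List ℕ) :
    antipodeSum x (a :: t)
      = stuffleMul (x []) (Finsupp.single (a :: t).reverse 1) - antipodeSum (x ∘ (a :: ·)) t := by
  rw [antipodeSum, sum_range_take_drop_cons (fun i u v =>
    (-1 : ℚ) ^ i • stuffleMul (x u) (Finsupp.single v.reverse 1)), antipodeSum, sub_eq_add_neg,
    ← sum_neg_distrib]
  simp [pow_succ]

lemma antipodeSum_nil (x : List ℕ → List ℕ →₀ ℚ) : antipodeSum x [] = x [] := by
  simp [antipodeSum, stuffleMul_single_nil_right]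

lemma antipodeSum_prepend_append_singleton (x : List ℕ → List ℕ →₀ ℚ) (a c : ℕ) (s : List ℕ) :
    antipodeSum (prepend a ∘ x) (s ++ [c])
      = prepend a (antipodeSum x (s ++ [c])) + prepend c (antipodeSum (prepend a ∘ x) s)
        + prepend (a + c) (antipodeSum x s) := by
  rw [antipodeSum, sum_range_take_drop_append_singleton (fun i u v =>
    (-1 : ℚ) ^ i • stuffleMul ((prepend a ∘ x) u) (Finsupp.single v.reverse 1)), antipodeSum,
    sum_range_take_drop_append_singleton (fun i u v =>
    (-1 : ℚ) ^ i • stuffleMul (x u) (Finsupp.single v.reverse 1))]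
  simp only [antipodeSum, map_add, map_sum, map_smul, Function.comp_apply, List.reverse_append,
    List.reverse_nil, List.reverse_singleton, List.singleton_append, stuffleMul_prepend_single_cons,
    stuffleMul_single_nil_right, smul_add, sum_add_distrib]
  abel

lemma antipodeSum_starWord_cons_cons (a b : ℕ) (t : List ℕ) :
    antipodeSum starWord (a :: b :: t) + antipodeSum (prepend a ∘ starWord) (b :: t)
        + antipodeSum starWord ((a + b) :: t)
      = Finsupp.single (a :: b :: t).reverse 1 + Finsupp.single ((a + b) :: t).reverse 1 := by
  have hsplit : (starWord ∘ (a :: ·)) ∘ (b :: ·)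
      = (prepend a ∘ starWord) ∘ (b :: ·) + starWord ∘ ((a + b) :: ·) :=
    funext fun u => starWord_cons_cons a b u
  rw [antipodeSum_cons, antipodeSum_cons _ b, hsplit, antipodeSum_add, antipodeSum_cons,
    antipodeSum_cons]
  simp only [Function.comp_apply, starWord_nil, starWord_singleton, stuffleMul_single_nil_left]
  abel

lemma antipodeSum_prepend_starWord_cons (a b : ℕ) (t : List ℕ)
    (hF : ∀ k, k ≠ [] → k.length ≤ t.length + 1 → antipodeSum starWord k = 0) :
    antipodeSum (prepend a ∘ starWord) (b :: t)
      = Finsupp.single (a :: b :: t).reverse 1 + Finsupp.single ((a + b) :: t).reverse 1 := by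
  induction t using List.reverseRecOn with
  | nil =>
    rw [← List.nil_append [b], antipodeSum_prepend_append_singleton,
      hF ([] ++ [b]) (by simp) le_rfl]
    simp [antipodeSum_nil, starWord_nil, prepend_single]
  | append_singleton s c ih =>
    have hF' : ∀ k, k ≠ [] → k.length ≤ s.length + 1 → antipodeSum starWord k = 0 :=
      fun k hk hlen => hF k hk (by simp only [List.length_append, List.length_singleton]; omega)
    rw [← List.cons_append, antipodeSum_prepend_append_singleton, ih hF',
      hF (b :: s ++ [c]) (List.cons_ne_nil _ _) (by simp),
      hF' (b :: s) (List.cons_ne_nil _ _) le_rfl]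
    simp [prepend_single]

theorem antipodeSum_starWord_eq_zero (k : List ℕ) (hk : k ≠ []) : antipodeSum starWord k = 0 := by
  induction hlen : k.length using Nat.strong_induction_on generalizing k with
  | _ n ih =>
    match k, hk with
    | [a], _ => simp [antipodeSum_cons, antipodeSum_nil, starWord_nil, starWord_singleton,
        stuffleMul_single_nil_left, prepend_single]
    | a :: b :: t, _ =>
      subst hlen
      have hF : ∀ k, k ≠ [] → k.length ≤ t.length + 1 → antipodeSum starWord k = 0 :=
        fun k hk hle => ih k.length (by simp only [List.length_cons]; omega) k hk rfl
      have h := antipodeSum_starWord_cons_cons a b t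
      rwa [antipodeSum_prepend_starWord_cons a b t hF, hF _ (List.cons_ne_nil _ _) le_rfl,
        add_zero, add_eq_right] at h

end

theorem antipode_identity_algebra_general (k : List ℕ) (hne : k ≠ []) :
    ∑ i ∈ Finset.range (k.length + 1),
      (-1 : ℚ) ^ i • qsMul (starWord (k.take i)) (Finsupp.single ((k.drop i).reverse) 1)
      = 0 := by
  simpa only [antipodeSum, qsMul_eq_stuffleMul] using antipodeSum_starWord_eq_zero k hne

/-- The antipode identity in the stuffle Hopf algebra: for any nonempty word
`w = z_{k₁}⋯z_{k_j}`,
`∑_{i=0}^{j} (-1)^i · (ζ^⋆-word of z_{k₁}⋯z_{k_i}) * (z_{k_j}⋯z_{k_{i+1}}) = 0`. -/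
theorem antipode_identity_algebra (k : List ℕ) (hne : k ≠ []) (hk : ∀ i ∈ k, 0 < i) :
    ∑ i ∈ Finset.range (k.length + 1),
      (-1 : ℚ) ^ i • qsMul (starWord (k.take i)) (Finsupp.single ((k.drop i).reverse) 1)
      = 0 :=
  antipode_identity_algebra_general k hne
end

section
/- For positive integers k₁,…,k_d with k₁, k_d ≥ 2, the series ∑_{-∞<m₁<⋯<m_d<∞} ∏_{i=1}^d 1/(z+m_i)^{k_i} converges absolutely for every z ∈ ℂ \ ℤ, defining the multitangent function Ψ_{k₁,…,k_d}(z). -/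
open scoped BigOperators
open Real

/-- The Hurwitz multiple zeta value `ζ^{(z)}(l₁,…,l_r) = ∑_{0<n₁<⋯<n_r} ∏ 1/(z+n_i)^{l_i}`. -/
noncomputable def HMZV (z : ℂ) (l : List ℕ) : ℂ :=
  ∑' n : {f : Fin l.length → ℕ+ // StrictMono f}, ∏ i, 1 / (z + ((n.1 i : ℕ) : ℂ)) ^ l.get i

/-- The multitangent function `Ψ_{k₁,…,k_d}(z) = ∑_{-∞<m₁<⋯<m_d<∞} ∏ 1/(z+m_i)^{k_i}`. -/
noncomputable def MTF (k : List ℕ) (z : ℂ) : ℂ :=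
  ∑' m : {f : Fin k.length → ℤ // StrictMono f}, ∏ i, 1 / (z + (m.1 i : ℂ)) ^ k.get i

/-!
Since `‖z + n‖ ≥ c (1 + |n|)` for all integers `n`, it suffices to bound `∏ wᵢ ^ (-kᵢ)` with
`wᵢ = 1 + |mᵢ|`. For `m₁ ≤ ⋯ ≤ m_d` every `wᵢ` is at most `M = max w₁ w_d`, so
`M ≥ (∏ wᵢ) ^ (1/d)`; the exponents `k₁, k_d ≥ 2` supply one extra factor `M`, whence
`∏ wᵢ ^ kᵢ ≥ (∏ wᵢ) * M ≥ ∏ wᵢ ^ (1 + 1/d)`. The reciprocal of the right-hand side is summable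
over all of `ℤ^d`, being the `d`-th power of `∑ₙ (1 + |n|) ^ (-1 - 1/d)`.
-/

open Filter Asymptotics

lemma summable_pi_prod_of_nonneg {ι κ : Type*} [Fintype ι] {g : κ → ℝ} (hg₀ : 0 ≤ g)
    (hg : Summable g) : Summable fun x : ι → κ => ∏ i, g (x i) := by
  classical
  refine summable_of_sum_le (c := (∑' j, g j) ^ Fintype.card ι)
    (fun x => Finset.prod_nonneg fun i _ => hg₀ _) fun s => ?_
  set t := s.biUnion fun x => Finset.univ.image x
  calc ∑ x ∈ s, ∏ i, g (x i)
      ≤ ∑ x ∈ Fintype.piFinset fun _ => t, ∏ i, g (x i) := by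
        refine Finset.sum_le_sum_of_subset_of_nonneg (fun x hx => ?_)
          fun x _ _ => Finset.prod_nonneg fun i _ => hg₀ _
        exact Fintype.mem_piFinset.2 fun i =>
          Finset.mem_biUnion.2 ⟨x, hx, Finset.mem_image_of_mem x (Finset.mem_univ i)⟩
    _ = ∏ _i : ι, ∑ j ∈ t, g j := (Finset.prod_univ_sum _ _).symm
    _ ≤ ∏ _i : ι, ∑' j, g j :=
        Finset.prod_le_prod (fun _ _ => Finset.sum_nonneg fun j _ => hg₀ j)
          fun _ _ => hg.sum_le_tsum _ fun j _ => hg₀ j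
    _ = (∑' j, g j) ^ Fintype.card ι := Finset.prod_const _

lemma summable_one_add_abs_rpow_inv {p : ℝ} (hp : 1 < p) :
    Summable fun n : ℤ => ((1 + |(n : ℝ)|) ^ p)⁻¹ := by
  have h := (Real.summable_one_div_nat_add_rpow 1 p).2 hp
  rw [summable_int_iff_summable_nat_and_neg]
  constructor <;> refine h.congr fun n => ?_ <;>
    simp [abs_of_nonneg (by positivity : (0 : ℝ) ≤ n + 1), add_comm]

lemma exists_norm_inv_add_intCast_le (z : ℂ) :
    ∃ C, ∀ n : ℤ, ‖(z + n)⁻¹‖ ≤ C * (1 + |(n : ℝ)|)⁻¹ := by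
  have hO : (fun n : ℤ => (z + n)⁻¹) =O[cofinite] fun n : ℤ => (1 + |(n : ℝ)|)⁻¹ := by
    refine IsBigO.of_bound 2 ?_
    filter_upwards [(tendsto_norm_cocompact_atTop.comp Int.tendsto_coe_cofinite).eventually_ge_atTop
      (2 * ‖z‖ + 1)] with n hn
    have hzn : (1 + |(n : ℝ)|) / 2 ≤ ‖z + n‖ := by
      have := norm_sub_norm_le (n : ℂ) (-z)
      simp only [Function.comp_apply, Real.norm_eq_abs] at hn
      rw [sub_neg_eq_add, add_comm, norm_neg, Complex.norm_intCast] at this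
      linarith
    calc ‖(z + n)⁻¹‖ = ‖z + n‖⁻¹ := norm_inv _
      _ ≤ ((1 + |(n : ℝ)|) / 2)⁻¹ := inv_anti₀ (by positivity) hzn
      _ = 2 * ‖(1 + |(n : ℝ)|)⁻¹‖ := by
        rw [norm_inv, Real.norm_of_nonneg (by positivity), inv_div, div_eq_mul_inv]
  -- the finitely many remaining `n` are absorbed into `C`; where `z + n = 0`, `‖0⁻¹‖ = 0`
  obtain ⟨C, hC⟩ := (isBigO_cofinite_iff fun n h => absurd h (by positivity)).1 hO
  exact ⟨C, fun n => by simpa [abs_of_pos (by positivity : 0 < 1 + |(n : ℝ)|)] using hC n⟩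

lemma prod_mul_le_prod_pow {ι : Type*} [Fintype ι] [DecidableEq ι] {w : ι → ℝ}
    (hw : ∀ i, 1 ≤ w i) {K : ι → ℕ} (hK : ∀ i, 1 ≤ K i) {j : ι} (hj : 2 ≤ K j) :
    (∏ i, w i) * w j ≤ ∏ i, w i ^ K i := by
  have hw₀ : ∀ i, 0 ≤ w i := fun i => zero_le_one.trans (hw i)
  calc (∏ i, w i) * w j = w j ^ 2 * ∏ i ∈ Finset.univ.erase j, w i := by
        rw [← Finset.mul_prod_erase _ _ (Finset.mem_univ j)]; ring
    _ ≤ w j ^ K j * ∏ i ∈ Finset.univ.erase j, w i ^ K i := by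
        refine mul_le_mul (pow_le_pow_right₀ (hw j) hj)
          (Finset.prod_le_prod (fun i _ => hw₀ i) fun i _ => le_self_pow₀ (hw i) ?_)
          (Finset.prod_nonneg fun i _ => hw₀ i) (pow_nonneg (hw₀ j) _)
        have := hK i
        omega
    _ = ∏ i, w i ^ K i := Finset.mul_prod_erase _ (fun i => w i ^ K i) (Finset.mem_univ j)

lemma prod_rpow_le_prod_pow_of_le_max {ι : Type*} [Fintype ι] {w : ι → ℝ} (hw : ∀ i, 1 ≤ w i)
    {K : ι → ℕ} (hK : ∀ i, 1 ≤ K i) {i₀ i₁ : ι} (h₀ : 2 ≤ K i₀) (h₁ : 2 ≤ K i₁)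
    (hmax : ∀ i, w i ≤ max (w i₀) (w i₁)) :
    ∏ i, w i ^ (1 + (Fintype.card ι : ℝ)⁻¹) ≤ ∏ i, w i ^ K i := by
  classical
  obtain ⟨j, hj, hjmax⟩ : ∃ j, 2 ≤ K j ∧ max (w i₀) (w i₁) = w j := by
    rcases max_choice (w i₀) (w i₁) with h | h
    exacts [⟨i₀, h₀, h⟩, ⟨i₁, h₁, h⟩]
  rw [hjmax] at hmax
  have hw₀ : ∀ i, 0 ≤ w i := fun i => zero_le_one.trans (hw i)
  have hprod : 0 < ∏ i, w i := Finset.prod_pos fun i _ => zero_lt_one.trans_le (hw i)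
  have hcard : (0 : ℝ) < Fintype.card ι := Nat.cast_pos.2 (Fintype.card_pos_iff.2 ⟨j⟩)
  have hroot : (∏ i, w i) ^ (Fintype.card ι : ℝ)⁻¹ ≤ w j := by
    rw [Real.rpow_inv_le_iff_of_pos hprod.le (hw₀ j) hcard, Real.rpow_natCast]
    exact (Finset.prod_le_prod (fun i _ => hw₀ i) fun i _ => hmax i).trans_eq
      (Finset.prod_const _)
  calc ∏ i, w i ^ (1 + (Fintype.card ι : ℝ)⁻¹)
      = (∏ i, w i) * (∏ i, w i) ^ (Fintype.card ι : ℝ)⁻¹ := by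
        rw [Real.finsetProd_rpow _ _ fun i _ => hw₀ i, Real.rpow_add hprod, Real.rpow_one]
    _ ≤ (∏ i, w i) * w j := by gcongr
    _ ≤ ∏ i, w i ^ K i := prod_mul_le_prod_pow hw hK hj

lemma norm_prod_one_div_add_intCast_pow_le {ι : Type*} [Fintype ι] [Preorder ι] {z : ℂ} {C : ℝ}
    (hC : ∀ n : ℤ, ‖(z + n)⁻¹‖ ≤ C * (1 + |(n : ℝ)|)⁻¹) {K : ι → ℕ} (hK : ∀ i, 1 ≤ K i)
    {i₀ i₁ : ι} (hbot : IsBot i₀) (htop : IsTop i₁) (h₀ : 2 ≤ K i₀) (h₁ : 2 ≤ K i₁)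
    {f : ι → ℤ} (hf : Monotone f) :
    ‖∏ i, 1 / (z + f i) ^ K i‖ ≤
      C ^ (∑ i, K i) * ∏ i, ((1 + |(f i : ℝ)|) ^ (1 + (Fintype.card ι : ℝ)⁻¹))⁻¹ := by
  set w : ι → ℝ := fun i => 1 + |(f i : ℝ)|
  have hw : ∀ i, 1 ≤ w i := fun i => le_add_of_nonneg_right (abs_nonneg _)
  have hmax : ∀ i, w i ≤ max (w i₀) (w i₁) := fun i => by
    simp only [w, max_add_add_left]
    gcongr
    exact abs_le_max_abs_abs (Int.cast_le.2 (hf (hbot i))) (Int.cast_le.2 (hf (htop i)))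
  have hC₀ : 0 ≤ C := by simpa using (norm_nonneg _).trans (hC 0)
  have hpow : 0 < ∏ i, w i ^ (1 + (Fintype.card ι : ℝ)⁻¹) :=
    Finset.prod_pos fun i _ => Real.rpow_pos_of_pos (zero_lt_one.trans_le (hw i)) _
  calc ‖∏ i, 1 / (z + f i) ^ K i‖ = ∏ i, ‖(z + f i)⁻¹‖ ^ K i := by
        simp only [norm_prod, one_div, norm_inv, norm_pow, inv_pow]
    _ ≤ ∏ i, (C * (w i)⁻¹) ^ K i :=
        Finset.prod_le_prod (fun i _ => by positivity) fun i _ =>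
          pow_le_pow_left₀ (norm_nonneg _) (hC _) _
    _ = C ^ (∑ i, K i) * (∏ i, w i ^ K i)⁻¹ := by
        simp only [mul_pow, inv_pow]
        rw [Finset.prod_mul_distrib, Finset.prod_pow_eq_pow_sum, Finset.prod_inv_distrib]
    _ ≤ C ^ (∑ i, K i) * (∏ i, w i ^ (1 + (Fintype.card ι : ℝ)⁻¹))⁻¹ :=
        mul_le_mul_of_nonneg_left
          (inv_anti₀ hpow (prod_rpow_le_prod_pow_of_le_max hw hK h₀ h₁ hmax)) (by positivity)
    _ = _ := by rw [Finset.prod_inv_distrib]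

theorem multitangent_summable_general (k : List ℕ) (hpos : ∀ i ∈ k, 0 < i)
    (hfirst : 2 ≤ k.headD 0) (hlast : 2 ≤ k.getLastD 0)
    (z : ℂ) :
    Summable (fun m : {f : Fin k.length → ℤ // StrictMono f} =>
      ‖∏ i, 1 / (z + (m.1 i : ℂ)) ^ k.get i‖) := by
  cases k with
  | nil => simp at hfirst
  | cons a t =>
    obtain ⟨C, hC⟩ := exists_norm_inv_add_intCast_le z
    have hp : (1 : ℝ) < 1 + (Fintype.card (Fin (t.length + 1)) : ℝ)⁻¹ :=
      lt_add_of_pos_right 1 (by simp only [Fintype.card_fin]; positivity)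
    have hlast' : 2 ≤ (a :: t).get (Fin.last t.length) := by
      simpa [List.getLastD_eq_getLast?, List.getLast?_eq_getElem?] using hlast
    refine Summable.of_nonneg_of_le (fun _ => norm_nonneg _)
      (fun m => norm_prod_one_div_add_intCast_pow_le (K := (a :: t).get) hC
        (fun i => hpos _ (List.get_mem _ _)) (i₀ := 0) (i₁ := Fin.last t.length)
        (fun i => Fin.zero_le i) (fun i => Fin.le_last i) hfirst hlast' m.2.monotone) ?_
    exact ((summable_pi_prod_of_nonneg (fun n => by positivity)
      (summable_one_add_abs_rpow_inv hp)).mul_left _).comp_injective Subtype.val_injective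

/-- Absolute convergence of the multitangent series: for positive integers `k₁,…,k_d` with
`k₁, k_d ≥ 2` and `z ∈ ℂ \ ℤ`, the series `∑_{-∞<m₁<⋯<m_d<∞} ∏ 1/(z+m_i)^{k_i}`
converges absolutely. -/
theorem multitangent_summable (k : List ℕ) (hpos : ∀ i ∈ k, 0 < i) (hne : k ≠ [])
    (hfirst : 2 ≤ k.headD 0) (hlast : 2 ≤ k.getLastD 0)
    (z : ℂ) (hz : ∀ m : ℤ, z ≠ m) :
    Summable (fun m : {f : Fin k.length → ℤ // StrictMono f} =>
      ‖∏ i, 1 / (z + (m.1 i : ℂ)) ^ k.get i‖) :=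
  multitangent_summable_general k hpos hfirst hlast z
end

section
/- For positive integers l₁,…,l_r (not necessarily l_r ≥ 2), the power series ∑_{a=0}^∞ z^a ζ_a^*(l₁,…,l_r) converges absolutely for |z| < 1. -/
open scoped BigOperators
open Real

lemma stuffle_cons_singleton (a b : ℕ) (u : List ℕ) :
    stuffle (a :: u) [b] = (stuffle u [b]).map (a :: ·) + {b :: a :: u} + {(a + b) :: u} := by
  simp [stuffle, stuffle_nil_right]

lemma length_mem_Icc_of_mem_stuffle {u v y : List ℕ} (hy : y ∈ stuffle u v) :
    y.length ∈ Set.Icc u.length (u.length + v.length) := by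
  rw [Set.mem_Icc]
  induction u, v using stuffle.induct generalizing y with
  | case1 v => simp_all [stuffle]
  | case2 u => simp_all [stuffle_nil_right]
  | case3 a u b v ih₁ ih₂ ih₃ =>
    rw [stuffle] at hy
    simp only [Multiset.mem_add, Multiset.mem_map] at hy
    rcases hy with (⟨x, hx, rfl⟩ | ⟨x, hx, rfl⟩) | ⟨x, hx, rfl⟩
    · have := ih₁ hx; simp only [List.length_cons] at *; omega
    · have := ih₂ hx; simp only [List.length_cons] at *; omega
    · have := ih₃ hx; simp only [List.length_cons] at *; omega

lemma pos_of_mem_stuffle {u v y : List ℕ} (hu : ∀ i ∈ u, 0 < i) (hv : ∀ i ∈ v, 0 < i)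
    (hy : y ∈ stuffle u v) : ∀ i ∈ y, 0 < i := by
  induction u, v using stuffle.induct generalizing y with
  | case1 v => simp_all [stuffle]
  | case2 u => simp_all [stuffle_nil_right]
  | case3 a u b v ih₁ ih₂ ih₃ =>
    rw [stuffle] at hy
    simp only [Multiset.mem_add, Multiset.mem_map] at hy
    simp only [List.mem_cons, forall_eq_or_imp] at hu hv
    rcases hy with (⟨x, hx, rfl⟩ | ⟨x, hx, rfl⟩) | ⟨x, hx, rfl⟩
    · simpa [hu.1] using ih₁ hu.2 (by simpa using hv) hx
    · simpa [hv.1] using ih₂ (by simpa using hu) hv.2 hx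
    · simpa [Nat.add_pos_left hu.1] using ih₃ hu.2 hv.2 hx

lemma append_singleton_mem_stuffle (u : List ℕ) (b : ℕ) : u ++ [b] ∈ stuffle u [b] := by
  induction u with
  | nil => simp [stuffle]
  | cons a u ih => simp [stuffle_cons_singleton, ih]

lemma card_stuffle_singleton (u : List ℕ) (b : ℕ) :
    Multiset.card (stuffle u [b]) = 2 * u.length + 1 := by
  induction u with
  | nil => simp [stuffle]
  | cons a u ih => simp [stuffle_cons_singleton, ih]; ring

def trailingOnes : List ℕ → ℕ
  | [] => 0
  | a :: u => if a = 1 ∧ trailingOnes u = u.length then u.length + 1 else trailingOnes u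

lemma trailingOnes_cons (a : ℕ) (u : List ℕ) : trailingOnes (a :: u) =
    if a = 1 ∧ trailingOnes u = u.length then u.length + 1 else trailingOnes u := rfl

lemma trailingOnes_le_length (w : List ℕ) : trailingOnes w ≤ w.length := by
  induction w with
  | nil => rfl
  | cons a u ih => rw [trailingOnes_cons]; split <;> simp only [List.length_cons] <;> omega

lemma trailingOnes_append_one (u : List ℕ) : trailingOnes (u ++ [1]) = trailingOnes u + 1 := by
  induction u with
  | nil => rfl
  | cons a u ih =>
    simp only [List.cons_append, trailingOnes_cons, ih, List.length_append, List.length_cons,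
      List.length_nil]
    by_cases h : a = 1 ∧ trailingOnes u = u.length
    · rw [if_pos ⟨h.1, by omega⟩, if_pos h]
    · rw [if_neg (fun h' => h ⟨h'.1, by omega⟩), if_neg h]

lemma cons_one_eq_append_one_of_trailingOnes_eq_length {w : List ℕ}
    (h : trailingOnes w = w.length) : 1 :: w = w ++ [1] := by
  induction w with
  | nil => rfl
  | cons a u ih =>
    rw [trailingOnes_cons] at h
    split at h
    · next hau => obtain ⟨rfl, hu⟩ := hau; rw [List.cons_append, ← ih hu]
    · have := trailingOnes_le_length u; simp only [List.length_cons] at h; omega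

lemma exists_eq_append_one_of_trailingOnes_pos {w : List ℕ} (h : 0 < trailingOnes w) :
    ∃ u, w = u ++ [1] := by
  induction w with
  | nil => simp [trailingOnes] at h
  | cons a u ih =>
    rw [trailingOnes_cons] at h
    split at h
    · next hau =>
      obtain ⟨rfl, hu⟩ := hau
      exact ⟨u, cons_one_eq_append_one_of_trailingOnes_eq_length hu⟩
    · obtain ⟨v, rfl⟩ := ih h; exact ⟨a :: v, rfl⟩

lemma two_le_getLastD_of_trailingOnes_eq_zero {w : List ℕ} (hw : ∀ i ∈ w, 0 < i)
    (h : trailingOnes w = 0) : 2 ≤ w.getLastD 2 := by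
  rcases List.eq_nil_or_concat w with rfl | ⟨u, a, rfl⟩
  · rfl
  · have ha : a ≠ 1 := by rintro rfl; simp [trailingOnes_append_one] at h
    have := hw a (by simp)
    simp only [List.concat_eq_append, List.getLastD_eq_getLast?, List.getLast?_append,
      List.getLast?_singleton, Option.some_or, Option.getD_some]
    omega

lemma trailingOnes_le_of_mem_stuffle_one {u y : List ℕ} (hu : ∀ i ∈ u, 0 < i)
    (hy : y ∈ stuffle u [1]) (hne : y ≠ u ++ [1]) : trailingOnes y ≤ trailingOnes u := by
  induction u generalizing y with
  | nil => simp [stuffle] at hy; exact absurd hy hne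
  | cons a u ih =>
    simp only [List.mem_cons, forall_eq_or_imp] at hu
    rw [stuffle_cons_singleton] at hy
    simp only [Multiset.mem_add, Multiset.mem_map, Multiset.mem_singleton] at hy
    rcases hy with (⟨x, hx, rfl⟩ | rfl) | rfl
    · have hxu := ih hu.2 hx (fun h => hne (by rw [h]; rfl))
      have hlen := (length_mem_Icc_of_mem_stuffle hx).1
      have := trailingOnes_le_length u
      simp only [trailingOnes_cons]
      split_ifs <;> omega
    · rw [trailingOnes_cons,
        if_neg fun h => hne (cons_one_eq_append_one_of_trailingOnes_eq_length h.2)]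
    · rw [trailingOnes_cons, if_neg (by omega), trailingOnes_cons]
      split_ifs <;> omega

lemma prod_rpow_one_add_le_prod_pow {ι : Type*} [Fintype ι] {c : ι → ℝ}
    {k : ι → ℕ} {j : ι} {ε : ℝ} (hc : ∀ i, 1 ≤ c i) (hcj : ∀ i, c i ≤ c j)
    (hk : ∀ i, 1 ≤ k i) (hkj : 2 ≤ k j) (hε : 0 ≤ ε) (hει : ε * Fintype.card ι ≤ 1) :
    ∏ i, c i ^ (1 + ε) ≤ ∏ i, c i ^ k i := by
  classical
  have hc0 : ∀ i, 0 ≤ c i := fun i => zero_le_one.trans (hc i)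
  have hcε : ∏ i, c i ^ ε ≤ c j :=
    calc ∏ i, c i ^ ε ≤ ∏ _i : ι, c j ^ ε :=
          Finset.prod_le_prod (fun i _ => rpow_nonneg (hc0 i) ε)
            (fun i _ => rpow_le_rpow (hc0 i) (hcj i) hε)
      _ = c j ^ (ε * Fintype.card ι) := by
          rw [Finset.prod_const, Finset.card_univ, ← rpow_natCast, ← rpow_mul (hc0 j)]
      _ ≤ c j := rpow_le_self_of_one_le (hc j) hει
  have hrest : ∏ i ∈ Finset.univ.erase j, c i ≤ ∏ i ∈ Finset.univ.erase j, c i ^ k i :=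
    Finset.prod_le_prod (fun i _ => hc0 i) fun i _ => le_self_pow₀ (hc i) (by have := hk i; omega)
  calc ∏ i, c i ^ (1 + ε) = (∏ i, c i) * ∏ i, c i ^ ε := by
        rw [← Finset.prod_mul_distrib]
        exact Finset.prod_congr rfl fun i _ => by
          rw [rpow_add' (hc0 i) (by positivity), rpow_one]
    _ ≤ (∏ i, c i) * c j := by gcongr; exact Finset.prod_nonneg fun i _ => hc0 i
    _ = c j ^ 2 * ∏ i ∈ Finset.univ.erase j, c i := by
        rw [← Finset.mul_prod_erase _ _ (Finset.mem_univ j)]; ring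
    _ ≤ c j ^ k j * ∏ i ∈ Finset.univ.erase j, c i ^ k i :=
        mul_le_mul (pow_le_pow_right₀ (hc j) hkj) hrest
          (Finset.prod_nonneg fun i _ => hc0 i) (pow_nonneg (hc0 j) _)
    _ = ∏ i, c i ^ k i := Finset.mul_prod_erase _ (fun i => c i ^ k i) (Finset.mem_univ j)

lemma summable_pi_fin_prod {α : Type*} {f : α → ℝ} (hf₀ : ∀ x, 0 ≤ f x) (hf : Summable f)
    (n : ℕ) : Summable fun m : Fin n → α => ∏ i, f (m i) := by
  induction n with
  | zero => exact Summable.of_finite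
  | succ n ih =>
    have hprod := hf.mul_of_nonneg ih hf₀ fun m => Finset.prod_nonneg fun i _ => hf₀ _
    refine ((Fin.consEquiv fun _ => α).symm.summable_iff.2 hprod).congr fun m => ?_
    simp [Fin.prod_univ_succ, Fin.tail]

lemma MZV_nonneg (k : List ℕ) : 0 ≤ MZV k :=
  tsum_nonneg fun _ => Finset.prod_nonneg fun _ _ => by positivity

lemma one_div_prod_pow_le_of_strictMono {k : List ℕ} (hk : ∀ i ∈ k, 0 < i)
    (hlast : 2 ≤ k.getLastD 2) {ε : ℝ} (hε : 0 ≤ ε) (hεk : ε * k.length ≤ 1)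
    {m : Fin k.length → ℕ+} (hm : StrictMono m) :
    ∏ i, 1 / ((m i : ℕ) : ℝ) ^ k.get i ≤ ∏ i, 1 / ((m i : ℕ) : ℝ) ^ (1 + ε) := by
  obtain rfl | hne := eq_or_ne k []
  · simp
  have hpos : 0 < k.length := List.length_pos_iff.2 hne
  set j : Fin k.length := ⟨k.length - 1, by omega⟩
  have hm1 : ∀ i, (1 : ℝ) ≤ ((m i : ℕ) : ℝ) := fun i => Nat.one_le_cast.2 (m i).pos
  have hkj : 2 ≤ k.get j := by
    rwa [List.getLastD_eq_getLast?, List.getLast?_eq_some_getLast hne,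
      List.getLast_eq_getElem] at hlast
  have hle := prod_rpow_one_add_le_prod_pow hm1
    (fun i => by exact_mod_cast hm.monotone (Fin.le_def.2 (by simp [j]; omega)))
    (fun i => hk _ (k.get_mem i)) hkj hε (by simpa using hεk)
  simp only [one_div, Finset.prod_inv_distrib]
  exact inv_anti₀ (Finset.prod_pos fun i _ => by have := hm1 i; positivity) hle

lemma MZV_le_tsum {k : List ℕ} (hk : ∀ i ∈ k, 0 < i) (hlast : 2 ≤ k.getLastD 2) {ε : ℝ}
    (hε : 0 < ε) (hεk : ε * k.length ≤ 1) :
    MZV k ≤ ∑' m : Fin k.length → ℕ+, ∏ i, 1 / ((m i : ℕ) : ℝ) ^ (1 + ε) := by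
  have hzeta : Summable fun m : ℕ+ => 1 / ((m : ℕ) : ℝ) ^ (1 + ε) :=
    (Real.summable_one_div_nat_rpow.2 (by linarith)).subtype {n | 0 < n}
  have hmaj := summable_pi_fin_prod (fun _ => by positivity) hzeta k.length
  have hle (m : {f : Fin k.length → ℕ+ // StrictMono f}) :=
    one_div_prod_pow_le_of_strictMono hk hlast hε.le hεk m.2
  calc MZV k ≤ ∑' m : {f : Fin k.length → ℕ+ // StrictMono f},
        ∏ i, 1 / ((m.1 i : ℕ) : ℝ) ^ (1 + ε) :=
        Summable.tsum_le_tsum hle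
          (.of_nonneg_of_le (fun _ => Finset.prod_nonneg fun _ _ => by positivity) hle
            (hmaj.subtype _))
          (hmaj.subtype _)
    _ ≤ _ := hmaj.tsum_subtype_le _ _ (fun _ => Finset.prod_nonneg fun _ _ => by positivity)

lemma exists_abs_MZV_le (r : ℕ) : ∃ C, 0 ≤ C ∧ ∀ k : List ℕ, k.length ≤ r →
    (∀ i ∈ k, 0 < i) → 2 ≤ k.getLastD 2 → |MZV k| ≤ C := by
  set ε : ℝ := 1 / (r + 1)
  have hε : 0 < ε := by positivity
  set C : ℕ → ℝ := fun n => ∑' m : Fin n → ℕ+, ∏ i, 1 / ((m i : ℕ) : ℝ) ^ (1 + ε)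
  have hC : ∀ n, 0 ≤ C n := fun n =>
    tsum_nonneg fun _ => Finset.prod_nonneg fun _ _ => by positivity
  refine ⟨∑ n ∈ Finset.range (r + 1), C n, Finset.sum_nonneg fun n _ => hC n,
    fun k hkr hk hlast => ?_⟩
  have hεk : ε * k.length ≤ 1 := by
    rw [div_mul_eq_mul_div, one_mul, div_le_one (by positivity)]
    exact_mod_cast Nat.le_succ_of_le hkr
  rw [abs_of_nonneg (MZV_nonneg k)]
  exact (MZV_le_tsum hk hlast hε hεk).trans
    (Finset.single_le_sum (fun n _ => hC n) (Finset.mem_range.2 (Nat.lt_succ_of_le hkr)))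

namespace IsStuffleReg

variable {Z : List ℕ → ℝ}

lemma abs_apply_append_one_le (hZ : IsStuffleReg Z) {u : List ℕ} (hu : ∀ i ∈ u, 0 < i)
    {B : ℝ} (hB : 0 ≤ B) (hBu : |Z u| ≤ B)
    (hBy : ∀ y ∈ stuffle u [1], y ≠ u ++ [1] → |Z y| ≤ B) :
    |Z (u ++ [1])| ≤ B * (|Z [1]| + (2 * u.length + 1)) := by
  set S := stuffle u [1]
  set T := S.filter (· ≠ u ++ [1])
  have hm : 1 ≤ S.count (u ++ [1]) := Multiset.count_pos.2 (append_singleton_mem_stuffle u 1)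
  have hsplit : Z u * Z [1] = S.count (u ++ [1]) * Z (u ++ [1]) + (T.map Z).sum := by
    have hmul : Z u * Z [1] = (S.map Z).sum := hZ.mul u [1] hu (by simp)
    rw [hmul]
    conv_lhs => rw [← Multiset.filter_add_not (· = u ++ [1]) S]
    rw [Multiset.map_add, Multiset.sum_add, Multiset.filter_eq', Multiset.map_replicate,
      Multiset.sum_replicate, nsmul_eq_mul]
  have hT : |(T.map Z).sum| ≤ (2 * u.length + 1) * B := by
    have hcard : Multiset.card T ≤ 2 * u.length + 1 :=
      card_stuffle_singleton u 1 ▸ Multiset.card_le_card (Multiset.filter_le _ _)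
    calc |(T.map Z).sum| ≤ ((T.map Z).map (|·|)).sum := Multiset.abs_sum_le_sum_abs
      _ ≤ Multiset.card T * B := by
          refine (Multiset.sum_le_card_nsmul _ B ?_).trans_eq (by simp)
          simp only [Multiset.map_map, Multiset.mem_map, Multiset.mem_filter, T]
          rintro _ ⟨y, ⟨hy, hne⟩, rfl⟩
          exact hBy y hy hne
      _ ≤ (2 * u.length + 1) * B := by gcongr; exact_mod_cast hcard
  calc |Z (u ++ [1])| ≤ S.count (u ++ [1]) * |Z (u ++ [1])| :=
        le_mul_of_one_le_left (abs_nonneg _) (by exact_mod_cast hm)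
    _ = |Z u * Z [1] - (T.map Z).sum| := by
        rw [hsplit, add_sub_cancel_right, abs_mul, Nat.abs_cast]
    _ ≤ |Z u| * |Z [1]| + |(T.map Z).sum| := by rw [← abs_mul]; exact abs_sub _ _
    _ ≤ B * |Z [1]| + (2 * u.length + 1) * B := by gcongr
    _ = B * (|Z [1]| + (2 * u.length + 1)) := by ring

lemma exists_abs_le (hZ : IsStuffleReg Z) (r : ℕ) :
    ∃ M, ∀ w : List ℕ, w.length ≤ r → (∀ i ∈ w, 0 < i) → |Z w| ≤ M := by
  obtain ⟨C, hC, hMZV⟩ := exists_abs_MZV_le r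
  set q := |Z [1]| + (2 * r + 1)
  have hq : 1 ≤ q := by have := abs_nonneg (Z [1]); have := r.cast_nonneg (α := ℝ); linarith
  suffices h : ∀ t, ∀ w : List ℕ, w.length ≤ r → (∀ i ∈ w, 0 < i) → trailingOnes w ≤ t →
      |Z w| ≤ C * q ^ t from
    ⟨C * q ^ r, fun w hw hpos => h r w hw hpos ((trailingOnes_le_length w).trans hw)⟩
  intro t
  induction t with
  | zero =>
    intro w hw hpos ht
    have hlast := two_le_getLastD_of_trailingOnes_eq_zero hpos (Nat.le_zero.1 ht)
    simpa [hZ.conv w hpos hlast] using hMZV w hw hpos hlast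
  | succ t ih =>
    intro w hw hpos ht
    rcases ht.lt_or_eq with ht | ht
    · exact (ih w hw hpos (Nat.lt_succ_iff.1 ht)).trans
        (mul_le_mul_of_nonneg_left (pow_le_pow_right₀ hq t.le_succ) hC)
    obtain ⟨u, rfl⟩ := exists_eq_append_one_of_trailingOnes_pos (w := w) (by omega)
    have hu : ∀ i ∈ u, 0 < i := fun i hi => hpos i (List.mem_append_left _ hi)
    have htu : trailingOnes u = t := by have := trailingOnes_append_one u; omega
    have hur : u.length + 1 ≤ r := by simpa using hw
    have hB := abs_apply_append_one_le hZ hu (by positivity) (ih u (by omega) hu htu.le)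
      fun y hy hne => ih y
        (by have := (length_mem_Icc_of_mem_stuffle hy).2; simp only [List.length_cons,
          List.length_nil] at this; omega)
        (pos_of_mem_stuffle hu (by simp) hy) (htu ▸ trailingOnes_le_of_mem_stuffle_one hu hy hne)
    refine hB.trans ?_
    have hlen : (u.length : ℝ) ≤ r := by exact_mod_cast (by omega : u.length ≤ r)
    rw [pow_succ, mul_assoc]
    gcongr
    linarith

end IsStuffleReg

lemma choose_sub_one_add_le_pow {n f a : ℕ} (hf : f ≤ a) :
    (n - 1 + f).choose f ≤ (a + 1) ^ n :=
  calc (n - 1 + f).choose f = (n - 1 + f).choose (n - 1) := Nat.choose_symm_add.symm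
    _ ≤ (n - 1 + f + 1 - (n - 1)) ^ (n - 1) := Nat.choose_le_sub_pow _ _
    _ ≤ (a + 1) ^ (n - 1) := Nat.pow_le_pow_left (by omega) _
    _ ≤ (a + 1) ^ n := Nat.pow_le_pow_right (by omega) (by omega)

lemma abs_zetaA_le {Z : List ℕ → ℝ} {l : List ℕ} (hl : ∀ i ∈ l, 0 < i) {M : ℝ}
    (hM : ∀ w : List ℕ, w.length = l.length → (∀ i ∈ w, 0 < i) → |Z w| ≤ M) (a : ℕ) :
    |zetaA Z a l| ≤ M * ((a : ℝ) + 1) ^ (l.length + l.sum) := by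
  set F := (Fintype.piFinset fun _ : Fin l.length => Finset.range (a + 1)).filter
    (fun f => ∑ i, f i = a)
  have hM0 : 0 ≤ M := (abs_nonneg _).trans (hM l rfl hl)
  have hterm : ∀ f ∈ F, |Z (List.ofFn fun i => l.get i + f i) *
      ∏ i, ((l.get i - 1 + f i).choose (f i) : ℝ)| ≤ M * ((a : ℝ) + 1) ^ l.sum := by
    intro f hf
    have hfa : ∀ i, f i ≤ a := fun i => Nat.lt_succ_iff.1 <| Finset.mem_range.1 <|
      Fintype.mem_piFinset.1 (Finset.mem_filter.1 hf).1 i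
    have hchoose : ∏ i, ((l.get i - 1 + f i).choose (f i) : ℝ) ≤ ((a : ℝ) + 1) ^ l.sum := by
      rw [← Fin.sum_univ_getElem, ← Finset.prod_pow_eq_pow_sum]
      gcongr with i
      exact_mod_cast choose_sub_one_add_le_pow (hfa i)
    have hZ : |Z (List.ofFn fun i => l.get i + f i)| ≤ M := hM _ (List.length_ofFn) <| by
      simp only [List.mem_ofFn, forall_exists_index]
      rintro _ i rfl
      exact Nat.add_pos_left (hl _ (l.get_mem i)) _
    rw [abs_mul]
    exact mul_le_mul hZ (by rwa [abs_of_nonneg (by positivity)]) (abs_nonneg _) hM0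
  have hcard : (F.card : ℝ) ≤ ((a : ℝ) + 1) ^ l.length := by
    have : F.card ≤ (a + 1) ^ l.length := (Finset.card_filter_le _ _).trans_eq (by simp)
    exact_mod_cast this
  calc |zetaA Z a l| = |∑ f ∈ F, Z (List.ofFn fun i => l.get i + f i) *
        ∏ i, ((l.get i - 1 + f i).choose (f i) : ℝ)| := by simp [zetaA, F, abs_mul]
    _ ≤ ∑ f ∈ F, |Z (List.ofFn fun i => l.get i + f i) *
        ∏ i, ((l.get i - 1 + f i).choose (f i) : ℝ)| := Finset.abs_sum_le_sum_abs _ _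
    _ ≤ F.card * (M * ((a : ℝ) + 1) ^ l.sum) := by
        simpa using Finset.sum_le_card_nsmul _ _ _ hterm
    _ ≤ ((a : ℝ) + 1) ^ l.length * (M * ((a : ℝ) + 1) ^ l.sum) := by gcongr
    _ = M * ((a : ℝ) + 1) ^ (l.length + l.sum) := by ring

lemma summable_add_one_pow_mul_geometric {x : ℝ} (hx : ‖x‖ < 1) (D : ℕ) :
    Summable fun a : ℕ => ((a : ℝ) + 1) ^ D * x ^ a := by
  simp_rw [add_pow, one_pow, mul_one, Finset.sum_mul]
  refine summable_sum fun j _ => ?_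
  simpa only [mul_assoc, mul_comm] using
    (summable_pow_mul_geometric_of_norm_lt_one j hx).mul_left (D.choose j : ℝ)

lemma summable_norm_pow_mul_of_norm_le {𝕜 : Type*} [NormedDivisionRing 𝕜] {z : 𝕜}
    (hz : ‖z‖ < 1) {c : ℕ → 𝕜} {C : ℝ} {D : ℕ} (hc : ∀ a, ‖c a‖ ≤ C * ((a : ℝ) + 1) ^ D) :
    Summable fun a => ‖z ^ a * c a‖ := by
  refine .of_nonneg_of_le (fun _ => norm_nonneg _) (fun a => ?_)
    ((summable_add_one_pow_mul_geometric (x := ‖z‖) (by rwa [norm_norm]) D).mul_left C)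
  rw [norm_mul, norm_pow, mul_comm, ← mul_assoc]
  exact mul_le_mul_of_nonneg_right (hc a) (by positivity)

/-- The power series `∑_{a≥0} z^a ζ_a^*(l₁,…,l_r)` converges absolutely for `|z| < 1`. -/
theorem streg_hurwitz_summable (Z : List ℕ → ℝ) (hZ : IsStuffleReg Z)
    (l : List ℕ) (hl : ∀ i ∈ l, 0 < i) (z : ℂ) (hz : ‖z‖ < 1) :
    Summable (fun a : ℕ => ‖z ^ a * ((zetaA Z a l : ℝ) : ℂ)‖) := by
  obtain ⟨M, hM⟩ := hZ.exists_abs_le l.length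
  refine summable_norm_pow_mul_of_norm_le (C := M) (D := l.length + l.sum) hz fun a => ?_
  rw [Complex.norm_real, Real.norm_eq_abs]
  exact abs_zetaA_le hl (fun w hw hpos => hM w hw.le hpos) a
end
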